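/- arXiv:1311.7278 — 4 statements merged into one kernel-verified Lean document; each statement's English description precedes it below -/
import Mathlib

section
/- Let x_1, ..., x_s be distinct n-bit strings viewed as integers less than 2^(n+1), let 0 < δ < 1 be rational, let p_1, ..., p_t be the first t = ⌈(1/δ)·s·n⌉ prime numbers. Then for every i ≤ s, the number of primes p among p_1,...,p_t for which there exists j ≠ i with x_i ≡ x_j (mod p) is strictly less than δ·t. -/
/-! Two distinct numbers below `2 ^ (n + 1)` are congruent modulo a prime only if it divides their
difference, a nonzero number below `2 ^ (n + 1)`, which has at most `n` prime factors because their
product is at least `2` to the power of their number. A union bound over the `s - 1` other strings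
leaves at most `(s - 1) n < s n ≤ δ t` bad primes. -/

open scoped Classical
open Finset

theorem Nat.card_primeFactors_lt_of_lt_two_pow {m k : ℕ} (hm : m ≠ 0) (h : m < 2 ^ k) :
    #m.primeFactors < k := by
  have hprod : 2 ^ #m.primeFactors ≤ m :=
    calc 2 ^ #m.primeFactors ≤ ∏ p ∈ m.primeFactors, p :=
          pow_card_le_prod _ _ _ fun p hp => (Nat.prime_of_mem_primeFactors hp).two_le
      _ ≤ m := Nat.le_of_dvd (Nat.pos_of_ne_zero hm) (Nat.prod_primeFactors_dvd m)
  exact (Nat.pow_lt_pow_iff_right (by norm_num)).mp (hprod.trans_lt h)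

theorem card_filter_nth_prime_dvd_le (t : ℕ) {m : ℕ} (hm : m ≠ 0) :
    #{k : Fin t | Nat.nth Nat.Prime k ∣ m} ≤ #m.primeFactors :=
  card_le_card_of_injOn (fun k => Nat.nth Nat.Prime k)
    (fun _ hk => Nat.mem_primeFactors.mpr ⟨Nat.prime_nth_prime _, (mem_filter.mp hk).2, hm⟩)
    fun _ _ _ _ h => Fin.val_injective (Nat.nth_injective Nat.infinite_setOfPred_prime h)

theorem card_filter_modEq_nth_prime_lt (t : ℕ) {a b k : ℕ} (hab : a ≠ b)
    (ha : a < 2 ^ k) (hb : b < 2 ^ k) :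
    #{i : Fin t | a ≡ b [MOD Nat.nth Nat.Prime i]} < k := by
  set m := ((b : ℤ) - a).natAbs
  have hm : m ≠ 0 := by omega
  have hmk : m < 2 ^ k := by omega
  calc #{i : Fin t | a ≡ b [MOD Nat.nth Nat.Prime i]}
      = #{i : Fin t | Nat.nth Nat.Prime i ∣ m} := by
        simp only [Nat.modEq_iff_dvd, Int.natCast_dvd, m]
    _ ≤ #m.primeFactors := card_filter_nth_prime_dvd_le t hm
    _ < k := Nat.card_primeFactors_lt_of_lt_two_pow hm hmk

theorem card_filter_exists_modEq_nth_prime_le {ι : Type*} [Fintype ι] (t n : ℕ) {x : ι → ℕ}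
    (hinj : Function.Injective x) (hbound : ∀ i, x i < 2 ^ (n + 1)) (i : ι) :
    #{k : Fin t | ∃ j, j ≠ i ∧ x i ≡ x j [MOD Nat.nth Nat.Prime k]} ≤ (Fintype.card ι - 1) * n := by
  have hunion : ({k : Fin t | ∃ j, j ≠ i ∧ x i ≡ x j [MOD Nat.nth Nat.Prime k]} : Finset _) =
      (univ.erase i).biUnion fun j => {k : Fin t | x i ≡ x j [MOD Nat.nth Nat.Prime k]} := by
    ext k; simp
  rw [hunion, ← card_univ, ← card_erase_of_mem (mem_univ i)]
  refine card_biUnion_le_card_mul _ _ _ fun j hj => Nat.lt_succ_iff.mp ?_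
  exact card_filter_modEq_nth_prime_lt t (hinj.ne (ne_of_mem_erase hj).symm) (hbound i) (hbound j)

theorem stmt_0_general (n s : ℕ) (hn : 1 ≤ n)
    (x : Fin s → ℕ) (hinj : Function.Injective x) (hbound : ∀ i, x i < 2 ^ (n + 1))
    (δ : ℚ) (hδ0 : 0 < δ)
    (t : ℕ) (ht : t = ⌈((s * n : ℕ) : ℚ) / δ⌉₊)
    (i : Fin s) :
    ((Finset.univ.filter fun k : Fin t =>
        ∃ j : Fin s, j ≠ i ∧ x i ≡ x j [MOD Nat.nth Nat.Prime k]).card : ℚ) < δ * t := by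
  have hbad := card_filter_exists_modEq_nth_prime_le t n hinj hbound i
  rw [Fintype.card_fin] at hbad
  have hlt : (s - 1) * n < s * n := Nat.mul_lt_mul_of_pos_right (Nat.sub_one_lt i.pos.ne') hn
  have hδt : ((s * n : ℕ) : ℚ) ≤ δ * t := by
    rw [ht, ← div_le_iff₀' hδ0]
    exact Nat.le_ceil _
  calc (_ : ℚ) ≤ ((s - 1) * n : ℕ) := by exact_mod_cast hbad
    _ < ((s * n : ℕ) : ℚ) := by exact_mod_cast hlt
    _ ≤ δ * t := hδt

/-- Let `x 0, ..., x (s-1)` be distinct `n`-bit strings viewed as integers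
`< 2^(n+1)`, let `0 < δ < 1` be rational, and let `t = ⌈(1/δ)·s·n⌉`. Then for every `i`,
the number of indices `k < t` such that the `k`-th prime `p` satisfies
`x i ≡ x j (mod p)` for some `j ≠ i` is strictly less than `δ·t`. -/
theorem stmt_0 (n s : ℕ) (hn : 1 ≤ n) (hs : 1 ≤ s)
    (x : Fin s → ℕ) (hinj : Function.Injective x) (hbound : ∀ i, x i < 2 ^ (n + 1))
    (δ : ℚ) (hδ0 : 0 < δ) (hδ1 : δ < 1)
    (t : ℕ) (ht : t = ⌈((s * n : ℕ) : ℚ) / δ⌉₊)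
    (i : Fin s) :
    ((Finset.univ.filter fun k : Fin t =>
        ∃ j : Fin s, j ≠ i ∧ x i ≡ x j [MOD Nat.nth Nat.Prime k]).card : ℚ) < δ * t :=
  stmt_0_general n s hn x hinj hbound δ hδ0 t ht i
end

section
/- Let G be a bipartite graph that is the graph of a (k, ε)-extractor E : {0,1}^n × {0,1}^d → {0,1}^m, where 0 < ε < 1, and suppose the average right degree (over all of L = {0,1}^n) is at most a. Then the number of left nodes x for which more than a 2ε fraction of the multiset {E(x,y) : y ∈ {0,1}^d} lands in A is less than 2^k, where A is the set of right nodes with degree at least a/ε. In other words, all but fewer than 2^k left nodes are (a/ε, 2ε)-rich. -/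
/-!
Markov's inequality on the right degrees shows that the heavy set `A` has at most an
`ε` fraction of the right nodes. If `2^k` left nodes each sent more than a `2ε` fraction of
their edges into `A`, then `A` would receive more than a `2ε` fraction of the edges leaving
this set, while its density is at most `ε`: a test that the extractor would fail.
-/

open scoped Classical

/-- `E : {0,1}^n × {0,1}^d → {0,1}^m` is a `(k,ε)`-extractor: for every left set `B` of
size at least `2^k` and every test set `A` of right nodes, the probability (for `x`
uniform in `B` and `y` uniform in `{0,1}^d`) that `E x y ∈ A` is within (strictly less
than) `ε` of the density `|A|/2^m`. -/
def IsExtractor (n d m k : ℕ) (ε : ℝ)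
    (E : (Fin n → Bool) → (Fin d → Bool) → (Fin m → Bool)) : Prop :=
  ∀ B : Finset (Fin n → Bool), 2 ^ k ≤ B.card →
    ∀ A : Finset (Fin m → Bool),
      |(((B ×ˢ (Finset.univ : Finset (Fin d → Bool))).filter
            fun q => E q.1 q.2 ∈ A).card : ℝ) / ((B.card : ℝ) * 2 ^ d)
          - (A.card : ℝ) / 2 ^ m| < ε

open Finset

lemma card_filter_fiber_ge_mul_le {ι γ : Type*} [Fintype ι] [Fintype γ] [DecidableEq γ] (f : ι → γ) (t : ℝ) :
    (#{z | t ≤ (#{i | f i = z} : ℝ)} : ℝ) * t ≤ Fintype.card ι := by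
  set H : Finset γ := {z | t ≤ (#{i | f i = z} : ℝ)}
  calc (#H : ℝ) * t = ∑ _z ∈ H, t := by rw [sum_const, nsmul_eq_mul]
    _ ≤ ∑ z ∈ H, (#{i | f i = z} : ℝ) := sum_le_sum fun z hz => (mem_filter.mp hz).2
    _ = #{i | f i ∈ H} := by rw [← Nat.cast_sum, sum_card_fiberwise_eq_card_filter]
    _ ≤ Fintype.card ι := by exact_mod_cast card_le_univ _

lemma card_filter_product_univ_eq_sum {α β : Type*} [Fintype β] (B : Finset α)
    (p : α → β → Prop) [∀ x y, Decidable (p x y)] :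
    #((B ×ˢ (univ : Finset β)).filter fun q => p q.1 q.2) = ∑ x ∈ B, #{y | p x y} := by
  simp only [card_filter, sum_product]

lemma IsExtractor.card_filter_lt_of_card_le {n d m k : ℕ} {ε : ℝ}
    {E : (Fin n → Bool) → (Fin d → Bool) → (Fin m → Bool)} (hext : IsExtractor n d m k ε E)
    {δ : ℝ} {A : Finset (Fin m → Bool)} (hA : (#A : ℝ) ≤ δ * 2 ^ m) :
    #{x | (δ + ε) * 2 ^ d < (#{y | E x y ∈ A} : ℝ)} < 2 ^ k := by
  set B : Finset (Fin n → Bool) := {x | (δ + ε) * 2 ^ d < (#{y | E x y ∈ A} : ℝ)}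
  by_contra! hB
  have hB_pos : (0 : ℝ) < #B := by exact_mod_cast (pow_pos two_pos k).trans_le hB
  have hB_ne : B.Nonempty := card_pos.mp (by exact_mod_cast hB_pos)
  have hhits : (δ + ε) * (#B * 2 ^ d) <
      (#((B ×ˢ (univ : Finset (Fin d → Bool))).filter fun q => E q.1 q.2 ∈ A) : ℝ) := by
    rw [card_filter_product_univ_eq_sum B fun x y => E x y ∈ A, Nat.cast_sum]
    calc (δ + ε) * (#B * 2 ^ d) = ∑ _x ∈ B, (δ + ε) * 2 ^ d := by
          rw [sum_const, nsmul_eq_mul]; ring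
      _ < _ := sum_lt_sum_of_nonempty hB_ne fun x hx => (mem_filter.mp hx).2
  have hdensity : (#A : ℝ) / 2 ^ m ≤ δ := by rwa [div_le_iff₀ (by positivity)]
  have hfraction := (lt_div_iff₀ (by positivity)).mpr hhits
  linarith [(abs_lt.mp (hext B hB A)).2]

theorem stmt_4_general (n d m k : ℕ) (ε : ℝ) (hε0 : 0 < ε)
    (E : (Fin n → Bool) → (Fin d → Bool) → (Fin m → Bool))
    (hext : IsExtractor n d m k ε E)
    (a : ℝ) (havg : ((2 : ℝ) ^ (n + d)) / 2 ^ m ≤ a)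
    (A : Finset (Fin m → Bool))
    (hA : A = Finset.univ.filter fun z : Fin m → Bool =>
      a / ε ≤ (((Finset.univ : Finset ((Fin n → Bool) × (Fin d → Bool))).filter
          fun q => E q.1 q.2 = z).card : ℝ)) :
    (Finset.univ.filter fun x : Fin n → Bool =>
        2 * ε * 2 ^ d <
          ((Finset.univ.filter fun y : Fin d → Bool => E x y ∈ A).card : ℝ)).card
      < 2 ^ k := by
  have ha : 0 < a := lt_of_lt_of_le (by positivity) havg
  have hmarkov : (#A : ℝ) * (a / ε) ≤ a * 2 ^ m := by
    have := card_filter_fiber_ge_mul_le (fun q : (Fin n → Bool) × (Fin d → Bool) => E q.1 q.2)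
      (a / ε)
    rw [← hA, Fintype.card_prod, Fintype.card_fun, Fintype.card_fun, Fintype.card_bool,
      Fintype.card_fin, Fintype.card_fin] at this
    rw [div_le_iff₀ (by positivity)] at havg
    push_cast at this
    linarith [pow_add (2 : ℝ) n d]
  have hA_card : (#A : ℝ) ≤ ε * 2 ^ m := by
    rw [mul_div_assoc', div_le_iff₀ hε0] at hmarkov
    nlinarith
  simpa only [two_mul] using hext.card_filter_lt_of_card_le hA_card

/-- in the graph of a `(k,ε)`-extractor whose average right degree
(counting multiplicity, i.e. total number of pairs `(x,y)` divided by `2^m`) is at most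
`a`, the number of left nodes `x` for which more than a `2ε` fraction of the multiset
`{E(x,y) : y}` lands in `A` is less than `2^k`, where `A` is the set of right nodes with
degree at least `a/ε`; i.e. all but fewer than `2^k` left nodes are `(a/ε, 2ε)`-rich. -/
theorem stmt_4 (n d m k : ℕ) (ε : ℝ) (hε0 : 0 < ε) (hε1 : ε < 1)
    (E : (Fin n → Bool) → (Fin d → Bool) → (Fin m → Bool))
    (hext : IsExtractor n d m k ε E)
    (a : ℝ) (havg : ((2 : ℝ) ^ (n + d)) / 2 ^ m ≤ a)
    (A : Finset (Fin m → Bool))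
    (hA : A = Finset.univ.filter fun z : Fin m → Bool =>
      a / ε ≤ (((Finset.univ : Finset ((Fin n → Bool) × (Fin d → Bool))).filter
          fun q => E q.1 q.2 = z).card : ℝ)) :
    (Finset.univ.filter fun x : Fin n → Bool =>
        2 * ε * 2 ^ d <
          ((Finset.univ.filter fun y : Fin d → Bool => E x y ∈ A).card : ℝ)).card
      < 2 ^ k :=
  stmt_4_general n d m k ε hε0 E hext a havg A hA
end

section
/- Suppose a left node x of a bipartite graph G = (L, R, E) is (s, δ)-rich in a subset B ⊆ L, where 0 < δ < 1. Let t = ⌈s·n/δ⌉ where L ⊆ {0,1}^n, and let H be the graph on L and R × {(p_i, r) : 1 ≤ i ≤ t, 0 ≤ r < p_i} obtained by replacing each edge (x, z) of G with the t edges (x, (z, p_i, x mod p_i)) for i = 1,...,t, where p_i is the i-th prime. Then x is 2δ-rich in B for H. -/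
/-!
Two distinct left nodes `b ≠ x < 2^(n+1)` agree modulo a prime `p` only if `p ∣ |b - x|`, and
a product of distinct primes dividing `|b - x| < 2^(n+1)` has at most `n` factors. So for a
neighbor `z` of `x` that is not `s`-shared, the fewer than `s` other nodes of `B` adjacent to `z`
collide with `x` for at most `s·n ≤ δ·t` of the `t` primes, and the `s`-shared neighbors, at most a
`δ` fraction of all neighbors, contribute at most another `δ·D·t` split edges.
-/

open Finset

theorem two_pow_card_filter_mod_eq_le {ι : Type*} [Fintype ι] {p : ι → ℕ}
    (hp : ∀ i, (p i).Prime) (hinj : Function.Injective p) {b x : ℕ} (hbx : b ≠ x) :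
    2 ^ #{i | b % p i = x % p i} ≤ ((b : ℤ) - x).natAbs := by
  set I : Finset ι := {i | b % p i = x % p i}
  have hdvd : ∏ q ∈ I.image p, q ∣ ((b : ℤ) - x).natAbs := by
    refine prod_primes_dvd _ (by simp [(hp _).prime]) ?_
    simp only [mem_image, mem_filter, mem_univ, true_and, I, forall_exists_index, and_imp]
    rintro _ i hi rfl
    exact Int.natCast_dvd.mp (Nat.modEq_iff_dvd.mp hi.symm)
  calc 2 ^ #I = 2 ^ #(I.image p) := by rw [card_image_of_injective _ hinj]
    _ ≤ ∏ q ∈ I.image p, q :=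
      pow_card_le_prod _ _ _ fun q hq => by
        obtain ⟨i, -, rfl⟩ := mem_image.mp hq; exact (hp i).two_le
    _ ≤ ((b : ℤ) - x).natAbs := Nat.le_of_dvd (by omega) hdvd

theorem card_filter_mod_eq_lt {ι : Type*} [Fintype ι] {p : ι → ℕ}
    (hp : ∀ i, (p i).Prime) (hinj : Function.Injective p) {b x m : ℕ} (hbx : b ≠ x)
    (hb : b < 2 ^ m) (hx : x < 2 ^ m) :
    #{i | b % p i = x % p i} < m :=
  (Nat.pow_lt_pow_iff_right (by norm_num)).mp <|
    (two_pow_card_filter_mod_eq_le hp hinj hbx).trans_lt (by omega)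

theorem card_filter_exists_mod_eq_le {ι : Type*} [Fintype ι] [DecidableEq ι] {p : ι → ℕ}
    (hp : ∀ i, (p i).Prime) (hinj : Function.Injective p) {F : Finset ℕ} {x n : ℕ}
    (hxF : x ∉ F) (hF : ∀ b ∈ F, b < 2 ^ (n + 1)) (hx : x < 2 ^ (n + 1)) :
    #{i | ∃ b ∈ F, b % p i = x % p i} ≤ #F * n := by
  calc #{i | ∃ b ∈ F, b % p i = x % p i}
      = #(F.biUnion fun b => ({i | b % p i = x % p i} : Finset ι)) := by
        congr 1; ext i; simp
    _ ≤ ∑ b ∈ F, #{i | b % p i = x % p i} := card_biUnion_le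
    _ ≤ ∑ _b ∈ F, n := sum_le_sum fun b hb =>
        Nat.le_of_lt_succ <|
          card_filter_mod_eq_lt hp hinj (ne_of_mem_of_not_mem hb hxF) (hF b hb) hx
    _ = #F * n := by rw [sum_const, smul_eq_mul]

theorem card_filter_prod_le {α β : Type*} [Fintype α] [DecidableEq α] [Fintype β]
    (P : α × β → Prop) [DecidablePred P] (S : Finset α) {m : ℕ} (hm : ∀ a ∉ S, #{b | P (a, b)} ≤ m) :
    #{ab | P ab} ≤ #S * Fintype.card β + Fintype.card α * m := by
  have hfiber : ∀ a, #{b | P (a, b)} ≤ (if a ∈ S then Fintype.card β else 0) + m := by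
    intro a
    split_ifs with ha
    · exact (card_le_univ _).trans (Nat.le_add_right _ _)
    · simpa using hm a ha
  calc #{ab | P ab} = ∑ a, #{b | P (a, b)} := by
        simp only [card_filter, Fintype.sum_prod_type]
    _ ≤ ∑ a, ((if a ∈ S then Fintype.card β else 0) + m) := sum_le_sum fun a _ => hfiber a
    _ = #S * Fintype.card β + Fintype.card α * m := by
        rw [sum_add_distrib, ← sum_filter]; simp [mul_comm]

theorem stmt_6_general {R : Type*} [DecidableEq R]
    (n s D t : ℕ)
    (δ : ℚ) (hδ0 : 0 < δ)
    (ht : t = ⌈((s * n : ℕ) : ℚ) / δ⌉₊)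
    (B : Finset ℕ) (hB : ∀ b ∈ B, b < 2 ^ (n + 1))
    (Ngh : ℕ → Fin D → R)
    (x : ℕ) (hxB : x ∈ B)
    (hrich : ((Finset.univ.filter fun y : Fin D =>
        s ≤ (B.filter fun b => ∃ y' : Fin D, Ngh b y' = Ngh x y).card).card : ℚ)
      ≤ δ * D) :
    ((Finset.univ.filter fun yk : Fin D × Fin t =>
        ∃ b ∈ B, b ≠ x ∧ ∃ y' : Fin D,
          Ngh b y' = Ngh x yk.1 ∧
          b % Nat.nth Nat.Prime yk.2 = x % Nat.nth Nat.Prime yk.2).card : ℚ)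
      ≤ 2 * δ * (D * t) := by
  set p : Fin t → ℕ := fun k => Nat.nth Nat.Prime k
  have hp : Function.Injective p :=
    (Nat.nth_injective Nat.infinite_setOfPred_prime).comp Fin.val_injective
  set S : Finset (Fin D) := {y | s ≤ #{b ∈ B | ∃ y', Ngh b y' = Ngh x y}}
  have hfiber : ∀ y ∉ S,
      #{k | ∃ b ∈ B, b ≠ x ∧ ∃ y', Ngh b y' = Ngh x y ∧ b % p k = x % p k} ≤ s * n := by
    intro y hy
    set F := {b ∈ B | ∃ y', Ngh b y' = Ngh x y}.erase x
    have hFs : #F ≤ s := by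
      have : #F ≤ #{b ∈ B | ∃ y', Ngh b y' = Ngh x y} := card_erase_le
      simp only [S, mem_filter, mem_univ, true_and, not_le] at hy
      omega
    calc _ = #{k | ∃ b ∈ F, b % p k = x % p k} := by
          congr 1; ext k; simp only [F, mem_filter, mem_univ, true_and, mem_erase]; grind
      _ ≤ #F * n :=
        card_filter_exists_mod_eq_le (p := p) (fun k => Nat.prime_nth_prime k) hp
          (notMem_erase x _) (fun b hb => hB b (mem_filter.mp (mem_of_mem_erase hb)).1)
          (hB x hxB)
      _ ≤ s * n := Nat.mul_le_mul_right n hFs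
  have hcount := card_filter_prod_le
    (fun yk : Fin D × Fin t =>
      ∃ b ∈ B, b ≠ x ∧ ∃ y', Ngh b y' = Ngh x yk.1 ∧ b % p yk.2 = x % p yk.2)
    S hfiber
  rw [Fintype.card_fin, Fintype.card_fin] at hcount
  have hsn : ((s * n : ℕ) : ℚ) ≤ δ * t := by
    rw [← div_le_iff₀' hδ0, ht]; exact Nat.le_ceil _
  calc _ ≤ (#S * t + D * (s * n : ℕ) : ℚ) := by exact_mod_cast hcount
    _ ≤ δ * D * t + D * (δ * t) := by gcongr
    _ = 2 * δ * (D * t) := by ring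

/-- splitting preserves richness: Let `G` be a left-regular bipartite graph
whose left nodes are `n`-bit strings viewed as integers `< 2^(n+1)`, with neighbor map
`Ngh : ℕ → Fin D → R` (the multiset of `D` neighbors of each left node), and let
`B` be a set of left nodes. Suppose `x ∈ B` is `(s,δ)`-rich in `B` for `G`, i.e. at most
a `δ` fraction of the `D` neighbors `Ngh x y` are `s`-shared in `B` (have at least `s`
left neighbors in `B`). Let `t = ⌈s·n/δ⌉` and let `H` be the graph obtained by replacing
each edge `(x, z)` of `G` by the `t` edges `(x, (z, pₖ, x mod pₖ))`, `k = 1,…,t`, where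
`pₖ` is the `k`-th prime. Then `x` is `2δ`-rich in `B` for `H`: at most a `2δ` fraction
of its `D·t` `H`-neighbors are shared in `B` (have at least two left neighbors in `B`). -/
theorem stmt_6 {R : Type*} [Fintype R] [DecidableEq R]
    (n s D t : ℕ) (hn : 1 ≤ n) (hs : 1 ≤ s) (hD : 1 ≤ D)
    (δ : ℚ) (hδ0 : 0 < δ) (hδ1 : δ < 1)
    (ht : t = ⌈((s * n : ℕ) : ℚ) / δ⌉₊)
    (B : Finset ℕ) (hB : ∀ b ∈ B, b < 2 ^ (n + 1))
    (Ngh : ℕ → Fin D → R)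
    (x : ℕ) (hxB : x ∈ B)
    (hrich : ((Finset.univ.filter fun y : Fin D =>
        s ≤ (B.filter fun b => ∃ y' : Fin D, Ngh b y' = Ngh x y).card).card : ℚ)
      ≤ δ * D) :
    ((Finset.univ.filter fun yk : Fin D × Fin t =>
        ∃ b ∈ B, b ≠ x ∧ ∃ y' : Fin D,
          Ngh b y' = Ngh x yk.1 ∧
          b % Nat.nth Nat.Prime yk.2 = x % Nat.nth Nat.Prime yk.2).card : ℚ)
      ≤ 2 * δ * (D * t) :=
  stmt_6_general n s D t δ hδ0 ht B hB Ngh x hxB hrich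
end

section
/- (Existence of extractors with logarithmic entropy loss) For all n, k ≤ n, and ε > 0, there exists a (k, ε)-extractor E : {0,1}^n × {0,1}^d → {0,1}^m with m = k + d − 2·log(1/ε) − O(1) and d = log(n − k) + 2·log(1/ε) + O(1). -/
/-! A uniformly random function `E : {0,1}^n → {0,1}^d → {0,1}^m` is an extractor. For a fixed
flat source `B` of size exactly `K = 2^k` and a fixed test set `A`, the number of pairs `(x, y)`
with `E x y ∈ A` is a sum of `K 2^d` independent indicators, so by Hoeffding's inequality it
deviates from its mean by `ε K 2^d` for at most a `2 exp (-2 ε² K 2^d)` fraction of all `E`.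
There are at most `(e 2^(n-k))^K` such sources and `2^(2^m)` tests, so a union bound leaves a
good `E` as soon as `2^d ≳ (n - k) / ε²` and `2^m ≲ K (n - k)`. A larger source is the average
of its `K`-subsets, so it inherits the bound. -/

open scoped Classical
open Finset Real MeasureTheory ProbabilityTheory

theorem exists_forall_not_of_sum_card_lt {α β : Type*} [Fintype α] (s : Finset β)
    (P : β → α → Prop) (h : ∑ i ∈ s, #{x | P i x} < Fintype.card α) :
    ∃ x, ∀ i ∈ s, ¬ P i x := by
  by_contra! hcover
  have hsub : (univ : Finset α) ⊆ s.biUnion fun i => {x | P i x} := fun x _ => by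
    simpa using hcover x
  have := (card_le_card hsub).trans card_biUnion_le
  rw [card_univ] at this
  exact h.not_ge this

theorem card_powersetCard_succ_filter_mem {α : Type*} {B : Finset α} {x : α} (hx : x ∈ B)
    (K : ℕ) :
    #{S ∈ B.powersetCard (K + 1) | x ∈ S} = (#B - 1).choose K := by
  rw [← card_erase_of_mem hx, ← card_powersetCard K (B.erase x)]
  refine card_bij' (fun S _ => S.erase x) (fun S _ => insert x S) ?_ ?_ ?_ ?_
  · intro S hS
    rw [mem_filter, mem_powersetCard] at hS
    rw [mem_powersetCard, card_erase_of_mem hS.2, hS.1.2]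
    exact ⟨erase_subset_erase x hS.1.1, rfl⟩
  · intro S hS
    rw [mem_powersetCard] at hS
    have hxS : x ∉ S := fun h => by simpa using hS.1 h
    rw [mem_filter, mem_powersetCard, card_insert_of_notMem hxS, hS.2]
    exact ⟨⟨insert_subset hx (hS.1.trans (erase_subset x B)), rfl⟩, mem_insert_self x S⟩
  · exact fun S hS => insert_erase (mem_filter.mp hS).2
  · exact fun S hS => erase_insert fun h => by simpa using (mem_powersetCard.mp hS).1 h

theorem sum_powersetCard_succ_sum {α M : Type*} [AddCommMonoid M] (B : Finset α) (K : ℕ)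
    (g : α → M) :
    ∑ S ∈ B.powersetCard (K + 1), ∑ x ∈ S, g x = (#B - 1).choose K • ∑ x ∈ B, g x := by
  have hS : ∀ S ∈ B.powersetCard (K + 1),
      ∑ x ∈ S, g x = ∑ x ∈ B, if x ∈ S then g x else 0 :=
    fun S hS => by rw [sum_ite_mem, inter_eq_right.mpr (mem_powersetCard.mp hS).1]
  rw [sum_congr rfl hS, sum_comm, smul_sum]
  refine sum_congr rfl fun x hx => ?_
  rw [← sum_filter, sum_const, card_powersetCard_succ_filter_mem hx]

theorem abs_sum_lt_of_forall_powersetCard {α : Type*} {B : Finset α} {K : ℕ} (hK : 0 < K)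
    (hKB : K ≤ #B) {g : α → ℝ} {δ : ℝ}
    (h : ∀ S ⊆ B, #S = K → |∑ x ∈ S, g x| < K * δ) : |∑ x ∈ B, g x| < #B * δ := by
  obtain ⟨K, rfl⟩ : ∃ K', K = K' + 1 := ⟨K - 1, by omega⟩
  obtain ⟨b, hb⟩ : ∃ b, #B = b + 1 := ⟨#B - 1, by omega⟩
  have hchoose : (#B : ℝ) * b.choose K = (#B).choose (K + 1) * (K + 1) := by
    rw [hb]; exact_mod_cast Nat.add_one_mul_choose_eq b K
  have hpos : (0 : ℝ) < b.choose K := by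
    exact_mod_cast Nat.choose_pos (by omega)
  have hne : (B.powersetCard (K + 1)).Nonempty := powersetCard_nonempty.mpr hKB
  refine lt_of_mul_lt_mul_left ?_ hpos.le
  calc (b.choose K : ℝ) * |∑ x ∈ B, g x|
      = |∑ S ∈ B.powersetCard (K + 1), ∑ x ∈ S, g x| := by
        rw [sum_powersetCard_succ_sum, hb, Nat.add_sub_cancel, nsmul_eq_mul, abs_mul,
          abs_of_pos hpos]
    _ ≤ ∑ S ∈ B.powersetCard (K + 1), |∑ x ∈ S, g x| := abs_sum_le_sum_abs _ _
    _ < ∑ _S ∈ B.powersetCard (K + 1), ((K + 1 : ℕ) : ℝ) * δ :=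
        sum_lt_sum_of_nonempty hne fun S hS =>
          h S (mem_powersetCard.mp hS).1 (mem_powersetCard.mp hS).2
    _ = b.choose K * (#B * δ) := by
        rw [sum_const, card_powersetCard, nsmul_eq_mul]
        push_cast
        linear_combination δ * hchoose.symm

section
variable {ι Z : Type*} [Fintype ι] [DecidableEq ι] [Fintype Z] [Nonempty Z]

theorem measureReal_pi_uniformOfFintype [MeasurableSpace Z] [DiscreteMeasurableSpace Z]
    (P : (ι → Z) → Prop) :
    (Measure.pi fun _ : ι => (PMF.uniformOfFintype Z).toMeasure).real {E | P E}
      = #{E | P E} / (Fintype.card Z : ℝ) ^ Fintype.card ι := by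
  have hsing : ∀ E : ι → Z, (Measure.pi fun _ : ι => (PMF.uniformOfFintype Z).toMeasure) {E}
      = ((Fintype.card Z : ENNReal)⁻¹) ^ Fintype.card ι := by
    intro E
    rw [← Set.univ_pi_singleton, Measure.pi_pi]
    simp only [PMF.toMeasure_apply_singleton _ _ (measurableSet_singleton _),
      PMF.uniformOfFintype_apply, prod_const, card_univ]
  have : {E | P E} = ((univ.filter P : Finset (ι → Z)) : Set (ι → Z)) := by ext; simp
  rw [measureReal_def, this, ← sum_measure_singleton]
  simp only [hsing, sum_const, nsmul_eq_mul]
  rw [ENNReal.toReal_mul]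
  simp [div_eq_mul_inv]

theorem integral_uniformOfFintype [MeasurableSpace Z] [DiscreteMeasurableSpace Z] (f : Z → ℝ) :
    ∫ z, f z ∂(PMF.uniformOfFintype Z).toMeasure = (∑ z, f z) / Fintype.card Z := by
  rw [integral_fintype (.of_finite), sum_div]
  refine sum_congr rfl fun z _ => ?_
  rw [measureReal_def, PMF.toMeasure_apply_singleton _ _ (measurableSet_singleton _),
    PMF.uniformOfFintype_apply]
  simp [div_eq_inv_mul]

theorem card_sum_ge_le {f : Z → ℝ} (hf : ∑ z, f z = 0) {a : ℝ}
    (hfa : ∀ z, f z ∈ Set.Icc a (a + 1)) (S : Finset ι) {t : ℝ} (ht : 0 ≤ t) :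
    (#{E : ι → Z | t ≤ ∑ s ∈ S, f (E s)} : ℝ)
      ≤ exp (-2 * t ^ 2 / #S) * (Fintype.card Z : ℝ) ^ Fintype.card ι := by
  let _ : MeasurableSpace Z := ⊤
  have : DiscreteMeasurableSpace Z := ⟨fun _ => trivial⟩
  set ν := (PMF.uniformOfFintype Z).toMeasure
  set μ := Measure.pi fun _ : ι => ν
  have hindep : iIndepFun (fun s (E : ι → Z) => f (E s)) μ :=
    iIndepFun_pi fun _ => Measurable.of_discrete.aemeasurable
  have hsubG : ∀ s ∈ S,
      HasSubgaussianMGF (fun E : ι → Z => f (E s)) ((‖a + 1 - a‖₊ / 2) ^ 2) μ := by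
    intro s _
    refine hasSubgaussianMGF_of_mem_Icc_of_integral_eq_zero
      (Measurable.of_discrete.comp (measurable_pi_apply s)).aemeasurable
      (ae_of_all _ fun E => hfa (E s)) ?_
    have := integral_map (μ := μ) (measurable_pi_apply s).aemeasurable
      (f := f) Measurable.of_discrete.aestronglyMeasurable
    rw [(measurePreserving_eval (fun _ : ι => ν) s).map_eq, integral_uniformOfFintype, hf,
      zero_div] at this
    exact this.symm
  have hM : (0 : ℝ) < (Fintype.card Z : ℝ) ^ Fintype.card ι := by positivity
  have := HasSubgaussianMGF.measure_sum_ge_le_of_iIndepFun hindep hsubG ht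
  rw [measureReal_pi_uniformOfFintype, div_le_iff₀ hM] at this
  refine this.trans_eq ?_
  rw [NNReal.coe_sum, sum_const, add_sub_cancel_left, nnnorm_one]
  push_cast
  ring_nf

theorem card_abs_card_filter_sub_ge_le [DecidableEq Z] (S : Finset ι) (A : Finset Z) {ε : ℝ}
    (hε : 0 ≤ ε) :
    (#{E : ι → Z | ε * #S ≤ |(#{s ∈ S | E s ∈ A} : ℝ) - #A / Fintype.card Z * #S|}
      : ℝ) ≤ 2 * exp (-2 * ε ^ 2 * #S) * (Fintype.card Z : ℝ) ^ Fintype.card ι := by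
  set p : ℝ := #A / Fintype.card Z
  have hp : p ∈ Set.Icc 0 1 :=
    ⟨by positivity, div_le_one_of_le₀ (by exact_mod_cast card_le_univ A) (by positivity)⟩
  set f : Z → ℝ := fun z => (if z ∈ A then 1 else 0) - p
  have hf : ∑ z, f z = 0 := by
    simp only [f, sum_sub_distrib, sum_boole, sum_const, card_univ, nsmul_eq_mul, p]
    field_simp
    simp
  have hsum : ∀ E : ι → Z, ∑ s ∈ S, f (E s) = (#{s ∈ S | E s ∈ A} : ℝ) - p * #S := by
    intro E
    simp only [f, sum_sub_distrib, sum_boole, sum_const, nsmul_eq_mul]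
    ring
  have hexp : exp (-2 * (ε * #S) ^ 2 / #S) = exp (-2 * ε ^ 2 * #S) := by
    rcases eq_or_ne (#S : ℝ) 0 with h | h
    · simp [h]
    · congr 1; field_simp
  have hup := card_sum_ge_le hf (a := -p) (fun z => by
    simp only [f, Set.mem_Icc]; split_ifs <;> constructor <;> linarith [hp.1, hp.2]) S
    (mul_nonneg hε (Nat.cast_nonneg #S))
  have hdown := card_sum_ge_le (f := fun z => -f z) (by simp [hf]) (a := p - 1) (fun z => by
    simp only [f, Set.mem_Icc]; split_ifs <;> constructor <;> linarith [hp.1, hp.2]) S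
    (mul_nonneg hε (Nat.cast_nonneg #S))
  simp only [hsum, sum_neg_distrib, hexp] at hup hdown
  set up := univ.filter fun E : ι → Z => ε * #S ≤ (#{s ∈ S | E s ∈ A} : ℝ) - p * #S
  set down := univ.filter fun E : ι → Z => ε * #S ≤ -((#{s ∈ S | E s ∈ A} : ℝ) - p * #S)
  calc (#{E : ι → Z | ε * #S ≤ |(#{s ∈ S | E s ∈ A} : ℝ) - p * #S|} : ℝ)
      ≤ #(up ∪ down) := by
        gcongr
        intro E
        simp only [up, down, mem_filter, mem_univ, true_and, mem_union]
        exact le_abs.mp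
    _ ≤ #up + #down := by exact_mod_cast card_union_le up down
    _ ≤ _ := by linarith
end

theorem exists_forall_card_eq_abs_lt {X Y Z : Type*} [Fintype X] [Fintype Y] [Fintype Z]
    [DecidableEq Z] [Nonempty Z] (K : ℕ) {ε : ℝ} (hε : 0 ≤ ε)
    (h : ((Fintype.card X).choose K : ℝ) * 2 ^ Fintype.card Z
      * (2 * exp (-2 * ε ^ 2 * (K * Fintype.card Y))) < 1) :
    ∃ E : X → Y → Z, ∀ B : Finset X, #B = K → ∀ A : Finset Z,
      |(#{q ∈ B ×ˢ univ | E q.1 q.2 ∈ A} : ℝ) - #A / Fintype.card Z * (K * Fintype.card Y)|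
        < ε * (K * Fintype.card Y) := by
  have hcard : ∀ B ∈ powersetCard K (univ : Finset X), (#(B ×ˢ (univ : Finset Y)) : ℝ)
      = K * Fintype.card Y := fun B hB => by
    rw [card_product, (mem_powersetCard.mp hB).2, card_univ, Nat.cast_mul]
  obtain ⟨E, hE⟩ := exists_forall_not_of_sum_card_lt
    (powersetCard K (univ : Finset X) ×ˢ (univ : Finset (Finset Z)))
    (fun (BA : Finset X × Finset Z) (E : X × Y → Z) => ε * #(BA.1 ×ˢ (univ : Finset Y)) ≤
      |(#{q ∈ BA.1 ×ˢ univ | E q ∈ BA.2} : ℝ)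
        - #BA.2 / Fintype.card Z * #(BA.1 ×ˢ (univ : Finset Y))|) <| by
    have hM : (0 : ℝ) < (Fintype.card Z : ℝ) ^ Fintype.card (X × Y) := by positivity
    rw [← Nat.cast_lt (α := ℝ), Nat.cast_sum, Fintype.card_fun, Nat.cast_pow]
    calc _ ≤ ∑ BA ∈ powersetCard K (univ : Finset X) ×ˢ (univ : Finset (Finset Z)),
          2 * exp (-2 * ε ^ 2 * (K * Fintype.card Y))
            * (Fintype.card Z : ℝ) ^ Fintype.card (X × Y) :=
          sum_le_sum fun BA hBA => by
            rw [← hcard BA.1 (mem_product.mp hBA).1]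
            exact card_abs_card_filter_sub_ge_le (BA.1 ×ˢ (univ : Finset Y)) BA.2 hε
      _ = ((Fintype.card X).choose K : ℝ) * 2 ^ Fintype.card Z
            * (2 * exp (-2 * ε ^ 2 * (K * Fintype.card Y)))
            * (Fintype.card Z : ℝ) ^ Fintype.card (X × Y) := by
          rw [sum_const, card_product, card_powersetCard, card_univ, card_univ,
            Fintype.card_finset, nsmul_eq_mul]
          push_cast
          ring
      _ < _ := (mul_lt_mul_of_pos_right h hM).trans_eq (one_mul _)
  refine ⟨Function.curry E, fun B hB A => ?_⟩
  have := hE (B, A) (mem_product.mpr ⟨mem_powersetCard.mpr ⟨subset_univ B, hB⟩, mem_univ A⟩)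
  rw [not_le, hcard B (mem_powersetCard.mpr ⟨subset_univ B, hB⟩)] at this
  exact this

theorem exists_forall_le_card_abs_div_sub_lt {X Y Z : Type*} [Fintype X] [Fintype Y] [Nonempty Y]
    [Fintype Z] [DecidableEq Z] [Nonempty Z] {K : ℕ} (hK : 0 < K) {ε : ℝ} (hε : 0 ≤ ε)
    (h : ((Fintype.card X).choose K : ℝ) * 2 ^ Fintype.card Z
      * (2 * exp (-2 * ε ^ 2 * (K * Fintype.card Y))) < 1) :
    ∃ E : X → Y → Z, ∀ B : Finset X, K ≤ #B → ∀ A : Finset Z,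
      |(#{q ∈ B ×ˢ univ | E q.1 q.2 ∈ A} : ℝ) / (#B * Fintype.card Y) - #A / Fintype.card Z|
        < ε := by
  obtain ⟨E, hE⟩ := exists_forall_card_eq_abs_lt K hε h
  refine ⟨E, fun B hKB A => ?_⟩
  set p : ℝ := #A / Fintype.card Z
  have hcount : ∀ S : Finset X,
      (#{q ∈ S ×ˢ univ | E q.1 q.2 ∈ A} : ℝ) - p * (#S * Fintype.card Y)
        = ∑ x ∈ S, ((#{y | E x y ∈ A} : ℝ) - p * Fintype.card Y) := by
    intro S
    rw [card_filter, sum_product, sum_sub_distrib, sum_const, nsmul_eq_mul]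
    simp only [card_filter, Nat.cast_sum]
    ring
  have hY : (0 : ℝ) < Fintype.card Y := by exact_mod_cast Fintype.card_pos
  have hB : (0 : ℝ) < #B := by exact_mod_cast hK.trans_le hKB
  have hsum := abs_sum_lt_of_forall_powersetCard hK hKB (δ := ε * Fintype.card Y)
    fun S _ hS => by
      rw [← hcount, hS]
      exact (hE S hS A).trans_eq (by ring)
  rw [← hcount] at hsum
  have hBY : (0 : ℝ) < #B * Fintype.card Y := mul_pos hB hY
  have hdiv : (#{q ∈ B ×ˢ univ | E q.1 q.2 ∈ A} : ℝ) / (#B * Fintype.card Y) - p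
      = ((#{q ∈ B ×ˢ univ | E q.1 q.2 ∈ A} : ℝ) - p * (#B * Fintype.card Y))
        / (#B * Fintype.card Y) := by
    field_simp
  rw [hdiv, abs_div, abs_of_pos hBY, div_lt_iff₀ hBY]
  linarith

theorem two_pow_le_exp (n : ℕ) : (2 : ℝ) ^ n ≤ exp n := by
  rw [← exp_one_pow]
  gcongr
  linarith [add_one_le_exp (1 : ℝ)]

theorem choose_mul_le_pow (c K : ℕ) : ((c * K).choose K : ℝ) ≤ (exp 1 * c) ^ K :=
  calc ((c * K).choose K : ℝ)
      ≤ ((c * K : ℕ) : ℝ) ^ K / K.factorial := Nat.choose_le_pow_div K _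
    _ = c ^ K * (K ^ K / K.factorial) := by push_cast; ring
    _ ≤ c ^ K * exp K := by gcongr; exact pow_div_factorial_le_exp _ (Nat.cast_nonneg K) K
    _ = (exp 1 * c) ^ K := by rw [← exp_one_pow]; ring

theorem le_two_pow_ceil_logb {x : ℝ} (hx : 0 < x) : x ≤ 2 ^ ⌈logb 2 x⌉₊ :=
  calc x = 2 ^ logb 2 x := (rpow_logb two_pos (by norm_num) hx).symm
    _ ≤ 2 ^ (⌈logb 2 x⌉₊ : ℝ) := rpow_le_rpow_of_exponent_le one_le_two (Nat.le_ceil _)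
    _ = 2 ^ ⌈logb 2 x⌉₊ := rpow_natCast _ _

theorem choose_two_pow_mul_exp_lt_one {k r s L : ℕ} {ε : ℝ} (hrs : r ≤ 2 ^ s)
    (hεL : 1 ≤ ε * 2 ^ L) :
    ((2 ^ (k + r)).choose (2 ^ k) : ℝ) * 2 ^ 2 ^ (k + s + 1)
      * (2 * exp (-2 * ε ^ 2 * (2 ^ k * 2 ^ (s + 2 * L + 2)))) < 1 := by
  set T : ℝ := 2 ^ k * 2 ^ s
  have hT : 1 ≤ T :=
    one_le_mul_of_one_le_of_one_le (one_le_pow₀ one_le_two) (one_le_pow₀ one_le_two)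
  have hchoose : ((2 ^ (k + r)).choose (2 ^ k) : ℝ) ≤ exp (2 * T) :=
    calc ((2 ^ (k + r)).choose (2 ^ k) : ℝ) = ((2 ^ r * 2 ^ k).choose (2 ^ k) : ℝ) := by
          rw [pow_add, mul_comm]
      _ ≤ (exp 1 * (2 ^ r : ℕ)) ^ 2 ^ k := choose_mul_le_pow _ _
      _ ≤ (exp 1 * exp r) ^ 2 ^ k := by push_cast; gcongr; exact two_pow_le_exp r
      _ = exp ((1 + r) * 2 ^ k) := by rw [← exp_add, ← exp_nat_mul]; push_cast; ring_nf
      _ ≤ exp (2 * T) := by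
          have hr : (r : ℝ) ≤ 2 ^ s := by exact_mod_cast hrs
          have hs : (1 : ℝ) ≤ 2 ^ s := one_le_pow₀ one_le_two
          have hk : (0 : ℝ) ≤ 2 ^ k := by positivity
          exact exp_le_exp.mpr (by nlinarith)
  have htests : (2 : ℝ) ^ 2 ^ (k + s + 1) ≤ exp (2 * T) := by
    rw [show 2 * T = ((2 ^ (k + s + 1) : ℕ) : ℝ) by push_cast; ring]
    exact two_pow_le_exp _
  have htwo : (2 : ℝ) ≤ exp T := by linarith [add_one_le_exp T]
  have hdev : exp (-2 * ε ^ 2 * (2 ^ k * 2 ^ (s + 2 * L + 2))) ≤ exp (-8 * T) := by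
    refine exp_le_exp.mpr ?_
    have : 1 ≤ (ε * 2 ^ L) ^ 2 := one_le_pow₀ hεL
    calc -2 * ε ^ 2 * (2 ^ k * 2 ^ (s + 2 * L + 2)) = -8 * T * (ε * 2 ^ L) ^ 2 := by ring
      _ ≤ -8 * T := by nlinarith
  calc ((2 ^ (k + r)).choose (2 ^ k) : ℝ) * 2 ^ 2 ^ (k + s + 1)
        * (2 * exp (-2 * ε ^ 2 * (2 ^ k * 2 ^ (s + 2 * L + 2))))
      ≤ exp (2 * T) * exp (2 * T) * (exp T * exp (-8 * T)) := by gcongr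
    _ = exp (-(3 * T)) := by rw [← exp_add, ← exp_add, ← exp_add]; ring_nf
    _ < 1 := exp_lt_one_iff.mpr (by linarith)

/-- existence of extractors with logarithmic entropy loss: there is a
constant `C` such that for all `n`, `k < n` and `0 < ε < 1` there exists a
`(k,ε)`-extractor `E : {0,1}^n × {0,1}^d → {0,1}^m` with entropy loss
`k + d − m ≤ 2·log(1/ε) + C` and seed length `d ≤ log(n−k) + 2·log(1/ε) + C`. -/
theorem stmt_17 :
    ∃ C : ℝ, ∀ (n k : ℕ) (ε : ℝ), k < n → 0 < ε → ε < 1 →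
      ∃ (d m : ℕ) (E : (Fin n → Bool) → (Fin d → Bool) → (Fin m → Bool)),
        IsExtractor n d m k ε E ∧
        (k + d : ℝ) ≤ m + 2 * Real.logb 2 (1 / ε) + C ∧
        (d : ℝ) ≤ Real.logb 2 ((n - k : ℕ)) + 2 * Real.logb 2 (1 / ε) + C := by
  refine ⟨5, fun n k ε hkn hε hε1 => ?_⟩
  set r := n - k
  set s := ⌈logb 2 r⌉₊
  set L := ⌈logb 2 (1 / ε)⌉₊
  have hr : (1 : ℝ) ≤ r := by exact_mod_cast (by omega : 1 ≤ n - k)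
  have hlogr := Nat.ceil_lt_add_one (logb_nonneg one_lt_two hr)
  have hlogε := Nat.ceil_lt_add_one (logb_nonneg one_lt_two (one_le_one_div hε hε1.le))
  have hrs : (r : ℝ) ≤ 2 ^ s := le_two_pow_ceil_logb (by positivity)
  replace hrs : r ≤ 2 ^ s := by exact_mod_cast hrs
  have hεL : 1 ≤ ε * 2 ^ L :=
    (div_le_iff₀' hε).mp (le_two_pow_ceil_logb (one_div_pos.mpr hε))
  have hunion := choose_two_pow_mul_exp_lt_one (k := k) hrs hεL
  rw [Nat.add_sub_cancel' hkn.le] at hunion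
  obtain ⟨E, hE⟩ := exists_forall_le_card_abs_div_sub_lt (X := Fin n → Bool)
    (Y := Fin (s + 2 * L + 2) → Bool) (Z := Fin (k + s + 1) → Bool) (K := 2 ^ k)
    (by positivity) hε.le (by simpa using hunion)
  refine ⟨s + 2 * L + 2, k + s + 1, E, fun B hB A => ?_, by push_cast; linarith,
    by push_cast; linarith⟩
  simpa only [Fintype.card_fun, Fintype.card_bool, Fintype.card_fin, Nat.cast_pow,
    Nat.cast_ofNat] using hE B hB A
end
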